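/- Covariance of within-transformed treatment with the lagged outcome: for every t ∈ {1,…,T}, Cov(D_t − D̄, Y_{t-1}) = −(τ₀·σ²/T)·Σ_{s=1}^{t-1} ρ₁₀^{t-s-1}. -/

import Mathlib

/-!
Iterating the recursion, `Y (t-1)` is a constant plus `∑_{r<t} ρ₁₀^(t-1-r) (τ₀ u_r + ε_r)`,
and the constant `c` cancels from `D_t − D̄`, so by bilinearity the covariance is a weighted sum
of `Cov(u_t − ū, τ₀ u_r + ε_r)` over `r < t`. By independence only the `u_r / T` summand of `ū`
contributes, so each of these equals `−τ₀ σ² / T`.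
-/

open Finset MeasureTheory ProbabilityTheory

/-- Covariance of two real random variables with respect to `μ`. -/
noncomputable def cov {Ω : Type*} [MeasurableSpace Ω] (μ : Measure Ω)
    (X Z : Ω → ℝ) : ℝ :=
  ∫ ω, (X ω - ∫ x, X x ∂μ) * (Z ω - ∫ x, Z x ∂μ) ∂μ

lemma cov_eq_covariance {Ω : Type*} [MeasurableSpace Ω] (μ : Measure Ω) (X Z : Ω → ℝ) :
    cov μ X Z = cov[X, Z; μ] := rfl

lemma exists_fin_add_one_eq {T s : ℕ} (hs1 : 1 ≤ s) (hsT : s ≤ T) :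
    ∃ i : Fin T, (i : ℕ) + 1 = s :=
  ⟨⟨s - 1, by omega⟩, Nat.sub_add_cancel hs1⟩

lemma sub_mul_sum_Icc_const_add (c : ℝ) (x : ℕ → ℝ) {T : ℕ} (hT : T ≠ 0) (t : ℕ) :
    c + x t - 1 / (T : ℝ) * ∑ s ∈ Icc 1 T, (c + x s)
      = x t - 1 / (T : ℝ) * ∑ s ∈ Icc 1 T, x s := by
  rw [sum_add_distrib, sum_const, Nat.card_Icc, Nat.add_sub_cancel, nsmul_eq_mul]
  field_simp
  ring

section Recursion

variable {Ω : Type*} [MeasurableSpace Ω] {μ : Measure Ω} {Y η : ℕ → Ω → ℝ} {N : ℕ}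
  {b ρ y₀ : ℝ}

lemma memLp_of_recursion [IsFiniteMeasure μ] (hY0 : ∀ ω, Y 0 ω = y₀)
    (hY : ∀ n, 1 ≤ n → n ≤ N → ∀ ω, Y n ω = b + ρ * Y (n - 1) ω + η n ω)
    (hη : ∀ n, 1 ≤ n → n ≤ N → MemLp (η n) 2 μ) :
    ∀ n ≤ N, MemLp (Y n) 2 μ := by
  intro n
  induction n with
  | zero =>
    intro _
    rw [show Y 0 = fun _ => y₀ from funext hY0]
    exact memLp_const y₀
  | succ n ih =>
    intro hn
    rw [show Y (n + 1) = fun ω => b + ρ * Y n ω + η (n + 1) ω from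
      funext (hY (n + 1) (by omega) hn)]
    exact ((memLp_const b).add ((ih (by omega)).const_mul ρ)).add (hη (n + 1) (by omega) hn)

lemma covariance_recursion_right [IsProbabilityMeasure μ] {W : Ω → ℝ} (hW : MemLp W 2 μ)
    (hY0 : ∀ ω, Y 0 ω = y₀)
    (hY : ∀ n, 1 ≤ n → n ≤ N → ∀ ω, Y n ω = b + ρ * Y (n - 1) ω + η n ω)
    (hη : ∀ n, 1 ≤ n → n ≤ N → MemLp (η n) 2 μ) :
    ∀ n ≤ N, cov[W, Y n; μ] = ∑ r ∈ Icc 1 n, ρ ^ (n - r) * cov[W, η r; μ] := by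
  intro n
  induction n with
  | zero =>
    intro _
    rw [show Y 0 = fun _ => y₀ from funext hY0]
    simp
  | succ n ih =>
    intro hn
    have hYn := memLp_of_recursion hY0 hY hη n (by omega)
    have hηn := hη (n + 1) (by omega) hn
    rw [show Y (n + 1) = fun ω => b + ((fun ω => ρ * Y n ω) + η (n + 1)) ω from
      funext fun ω => (hY (n + 1) (by omega) hn ω).trans (add_assoc _ _ _),
      covariance_const_add_right ((hYn.const_mul ρ).add hηn |>.integrable one_le_two),
      covariance_add_right hW (hYn.const_mul ρ) hηn, covariance_const_mul_right,
      ih (by omega), sum_Icc_succ_top (by omega), Nat.sub_self, pow_zero, one_mul, mul_sum]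
    congr 1
    refine sum_congr rfl fun r hr => ?_
    rw [show n + 1 - r = n - r + 1 by have := (mem_Icc.1 hr).2; omega, pow_succ]
    ring

end Recursion

section Independence

variable {Ω : Type*} [MeasurableSpace Ω] {μ : Measure Ω} {T : ℕ} {ε u : ℕ → Ω → ℝ}

lemma indepFun_treatment_outcome
    (h : iIndepFun (Sum.elim (fun t : Fin T => ε (t + 1)) (fun t : Fin T => u (t + 1))) μ)
    {s r : ℕ} (hs1 : 1 ≤ s) (hsT : s ≤ T) (hr1 : 1 ≤ r) (hrT : r ≤ T) :
    IndepFun (u s) (ε r) μ := by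
  obtain ⟨i, rfl⟩ := exists_fin_add_one_eq hs1 hsT
  obtain ⟨j, rfl⟩ := exists_fin_add_one_eq hr1 hrT
  exact h.indepFun (i := Sum.inr i) (j := Sum.inl j) Sum.inr_ne_inl

lemma indepFun_treatment_treatment
    (h : iIndepFun (Sum.elim (fun t : Fin T => ε (t + 1)) (fun t : Fin T => u (t + 1))) μ)
    {s r : ℕ} (hs1 : 1 ≤ s) (hsT : s ≤ T) (hr1 : 1 ≤ r) (hrT : r ≤ T) (hsr : s ≠ r) :
    IndepFun (u s) (u r) μ := by
  obtain ⟨i, rfl⟩ := exists_fin_add_one_eq hs1 hsT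
  obtain ⟨j, rfl⟩ := exists_fin_add_one_eq hr1 hrT
  exact h.indepFun (i := Sum.inr i) (j := Sum.inr j) (by simpa [Fin.ext_iff] using hsr)

end Independence

section Treatment

variable {Ω : Type*} [MeasurableSpace Ω] {μ : Measure Ω} [IsProbabilityMeasure μ] {T : ℕ}
  {ε u : ℕ → Ω → ℝ} {σ2 : ℝ}

lemma covariance_treatment_innovation (τ₀ : ℝ)
    (hεL2 : ∀ t : ℕ, 1 ≤ t → t ≤ T → MemLp (ε t) 2 μ)
    (huL2 : ∀ t : ℕ, 1 ≤ t → t ≤ T → MemLp (u t) 2 μ)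
    (hindep : iIndepFun
      (Sum.elim (fun t : Fin T => ε (t + 1)) (fun t : Fin T => u (t + 1))) μ)
    (humean : ∀ t : ℕ, 1 ≤ t → t ≤ T → ∫ ω, u t ω ∂μ = 0)
    (huvar : ∀ t : ℕ, 1 ≤ t → t ≤ T → ∫ ω, (u t ω) ^ 2 ∂μ = σ2)
    {s r : ℕ} (hs1 : 1 ≤ s) (hsT : s ≤ T) (hr1 : 1 ≤ r) (hrT : r ≤ T) :
    cov[u s, fun ω => τ₀ * u r ω + ε r ω; μ] = if s = r then τ₀ * σ2 else 0 := by
  rw [show (fun ω => τ₀ * u r ω + ε r ω) = (fun ω => τ₀ * u r ω) + ε r from rfl,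
    covariance_add_right (huL2 s hs1 hsT) ((huL2 r hr1 hrT).const_mul τ₀) (hεL2 r hr1 hrT),
    covariance_const_mul_right,
    (indepFun_treatment_outcome hindep hs1 hsT hr1 hrT).covariance_eq_zero
      (huL2 s hs1 hsT) (hεL2 r hr1 hrT), add_zero]
  split_ifs with hsr
  · subst hsr
    rw [covariance_self (huL2 s hs1 hsT).aemeasurable,
      variance_of_integral_eq_zero (huL2 s hs1 hsT).aemeasurable (humean s hs1 hsT),
      huvar s hs1 hsT]
  · rw [(indepFun_treatment_treatment hindep hs1 hsT hr1 hrT hsr).covariance_eq_zero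
      (huL2 s hs1 hsT) (huL2 r hr1 hrT), mul_zero]

lemma covariance_demeaned_treatment_innovation (τ₀ : ℝ)
    (hεL2 : ∀ t : ℕ, 1 ≤ t → t ≤ T → MemLp (ε t) 2 μ)
    (huL2 : ∀ t : ℕ, 1 ≤ t → t ≤ T → MemLp (u t) 2 μ)
    (hindep : iIndepFun
      (Sum.elim (fun t : Fin T => ε (t + 1)) (fun t : Fin T => u (t + 1))) μ)
    (humean : ∀ t : ℕ, 1 ≤ t → t ≤ T → ∫ ω, u t ω ∂μ = 0)
    (huvar : ∀ t : ℕ, 1 ≤ t → t ≤ T → ∫ ω, (u t ω) ^ 2 ∂μ = σ2)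
    {t r : ℕ} (ht1 : 1 ≤ t) (htT : t ≤ T) (hr1 : 1 ≤ r) (hrT : r ≤ T) (htr : t ≠ r) :
    cov[fun ω => u t ω - 1 / (T : ℝ) * ∑ s ∈ Icc 1 T, u s ω,
      fun ω => τ₀ * u r ω + ε r ω; μ] = -(τ₀ * σ2 / T) := by
  have hu : ∀ s ∈ Icc 1 T, MemLp (u s) 2 μ := fun s hs =>
    huL2 s (mem_Icc.1 hs).1 (mem_Icc.1 hs).2
  have hη : MemLp (fun ω => τ₀ * u r ω + ε r ω) 2 μ :=
    ((huL2 r hr1 hrT).const_mul τ₀).add (hεL2 r hr1 hrT)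
  rw [covariance_fun_sub_left (huL2 t ht1 htT) ((memLp_finsetSum _ hu).const_mul _) hη,
    covariance_const_mul_left, covariance_fun_sum_left' hu hη,
    sum_congr rfl fun s hs => covariance_treatment_innovation τ₀ hεL2 huL2 hindep humean huvar
      (mem_Icc.1 hs).1 (mem_Icc.1 hs).2 hr1 hrT,
    sum_ite_eq', if_pos (mem_Icc.2 ⟨hr1, hrT⟩),
    covariance_treatment_innovation τ₀ hεL2 huL2 hindep humean huvar ht1 htT hr1 hrT,
    if_neg htr]
  ring

end Treatment

theorem within_treatment_lagged_outcome_cov_general {Ω : Type*} [MeasurableSpace Ω]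
    (μ : Measure Ω) [IsProbabilityMeasure μ] (T : ℕ)
    (τ₀ ρ₁₀ a c Y₀ σ2 : ℝ)
    (ε u : ℕ → Ω → ℝ)
    (hεL2 : ∀ t : ℕ, 1 ≤ t → t ≤ T → MemLp (ε t) 2 μ)
    (huL2 : ∀ t : ℕ, 1 ≤ t → t ≤ T → MemLp (u t) 2 μ)
    (hindep : iIndepFun
      (Sum.elim (fun t : Fin T => ε (t + 1)) (fun t : Fin T => u (t + 1))) μ)
    (humean : ∀ t : ℕ, 1 ≤ t → t ≤ T → ∫ ω, u t ω ∂μ = 0)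
    (huvar : ∀ t : ℕ, 1 ≤ t → t ≤ T → ∫ ω, (u t ω) ^ 2 ∂μ = σ2)
    (Y D : ℕ → Ω → ℝ) (hY0 : ∀ ω, Y 0 ω = Y₀)
    (hD : ∀ t : ℕ, 1 ≤ t → t ≤ T → ∀ ω, D t ω = c + u t ω)
    (hY : ∀ t : ℕ, 1 ≤ t → t ≤ T → ∀ ω,
      Y t ω = a + τ₀ * D t ω + ρ₁₀ * Y (t - 1) ω + ε t ω) :
    ∀ t : ℕ, 1 ≤ t → t ≤ T →
      cov μ (fun ω => D t ω - (1 / (T : ℝ)) * ∑ s ∈ Icc 1 T, D s ω) (Y (t - 1))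
        = -(τ₀ * σ2 / (T : ℝ)) * ∑ s ∈ Icc 1 (t - 1), ρ₁₀ ^ (t - s - 1) := by
  intro t ht1 htT
  have hYrec : ∀ n, 1 ≤ n → n ≤ T → ∀ ω,
      Y n ω = (a + τ₀ * c) + ρ₁₀ * Y (n - 1) ω + (τ₀ * u n ω + ε n ω) := by
    intro n hn1 hnT ω
    rw [hY n hn1 hnT ω, hD n hn1 hnT ω]
    ring
  have hwithin : (fun ω => D t ω - 1 / (T : ℝ) * ∑ s ∈ Icc 1 T, D s ω)
      = fun ω => u t ω - 1 / (T : ℝ) * ∑ s ∈ Icc 1 T, u s ω := by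
    funext ω
    rw [hD t ht1 htT, sum_congr rfl fun s hs => hD s (mem_Icc.1 hs).1 (mem_Icc.1 hs).2 ω]
    exact sub_mul_sum_Icc_const_add c (u · ω) (by omega) t
  have hW : MemLp (fun ω => u t ω - 1 / (T : ℝ) * ∑ s ∈ Icc 1 T, u s ω) 2 μ :=
    (huL2 t ht1 htT).sub ((memLp_finsetSum _ fun s hs =>
      huL2 s (mem_Icc.1 hs).1 (mem_Icc.1 hs).2).const_mul _)
  rw [cov_eq_covariance, hwithin, covariance_recursion_right hW hY0 hYrec
    (fun n hn1 hnT => ((huL2 n hn1 hnT).const_mul τ₀).add (hεL2 n hn1 hnT)) (t - 1) (by omega),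
    mul_sum]
  refine sum_congr rfl fun r hr => ?_
  obtain ⟨hr1, hrt⟩ := mem_Icc.1 hr
  rw [covariance_demeaned_treatment_innovation τ₀ hεL2 huL2 hindep humean huvar ht1 htT hr1
    (by omega) (by omega), Nat.sub_right_comm]
  ring

/-- Covariance of within-transformed treatment with the lagged outcome: for every
`t ∈ {1,…,T}`, `Cov(D_t − D̄, Y_{t-1}) = −(τ₀·σ²/T)·Σ_{s=1}^{t-1} ρ₁₀^{t-s-1}`. -/
theorem within_treatment_lagged_outcome_cov {Ω : Type*} [MeasurableSpace Ω]
    (μ : Measure Ω) [IsProbabilityMeasure μ] (T : ℕ) (hT : 2 ≤ T)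
    (τ₀ ρ₁₀ a c Y₀ σ2 : ℝ)
    (ε u : ℕ → Ω → ℝ)
    (hεmeas : ∀ t, Measurable (ε t)) (humeas : ∀ t, Measurable (u t))
    (hεL2 : ∀ t : ℕ, 1 ≤ t → t ≤ T → MemLp (ε t) 2 μ)
    (huL2 : ∀ t : ℕ, 1 ≤ t → t ≤ T → MemLp (u t) 2 μ)
    (hindep : iIndepFun
      (Sum.elim (fun t : Fin T => ε (t + 1)) (fun t : Fin T => u (t + 1))) μ)
    (hεmean : ∀ t : ℕ, 1 ≤ t → t ≤ T → ∫ ω, ε t ω ∂μ = 0)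
    (humean : ∀ t : ℕ, 1 ≤ t → t ≤ T → ∫ ω, u t ω ∂μ = 0)
    (huvar : ∀ t : ℕ, 1 ≤ t → t ≤ T → ∫ ω, (u t ω) ^ 2 ∂μ = σ2)
    (Y D : ℕ → Ω → ℝ) (hY0 : ∀ ω, Y 0 ω = Y₀)
    (hD : ∀ t : ℕ, 1 ≤ t → t ≤ T → ∀ ω, D t ω = c + u t ω)
    (hY : ∀ t : ℕ, 1 ≤ t → t ≤ T → ∀ ω,
      Y t ω = a + τ₀ * D t ω + ρ₁₀ * Y (t - 1) ω + ε t ω) :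
    ∀ t : ℕ, 1 ≤ t → t ≤ T →
      cov μ (fun ω => D t ω - (1 / (T : ℝ)) * ∑ s ∈ Icc 1 T, D s ω) (Y (t - 1))
        = -(τ₀ * σ2 / (T : ℝ)) * ∑ s ∈ Icc 1 (t - 1), ρ₁₀ ^ (t - s - 1) :=
  within_treatment_lagged_outcome_cov_general μ T τ₀ ρ₁₀ a c Y₀ σ2 ε u hεL2 huL2 hindep humean huvar
    Y D hY0 hD hY
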